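/- Suppose y_i ⟨a_i, x*⟩ > 0 for all i = 1,…,m (measurements consistent with x*). Then f_MLE(t x*) := −(1/m) Σ_i log Φ(y_i ⟨a_i, t x*⟩) is strictly positive for all t > 0 but tends to 0 as t → +∞; hence inf over the ray {t x* : t > 0} of f_MLE is 0 and is not attained. -/

import Mathlib

/-!
Along the ray the objective is `t ↦ -(1/m) Σᵢ log Φ(t cᵢ)` with `cᵢ = yᵢ⟨aᵢ, x*⟩ > 0`.
Since `0 < Φ < 1`, every term `-log Φ(t cᵢ)` is positive, and since `Φ(u) → 1` as `u → ∞`,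
every term tends to `0`. A positive function tending to `0` has infimum `0` and never attains it.
-/

open scoped InnerProductSpace

/-- The standard normal CDF. -/
noncomputable def Phi (u : ℝ) : ℝ :=
  ∫ v in Set.Iio u, (Real.sqrt (2 * Real.pi))⁻¹ * Real.exp (-v ^ 2 / 2)

open MeasureTheory ProbabilityTheory Real Set Filter Topology

lemma isGLB_image_Ioi_of_tendsto_atTop {f : ℝ → ℝ} {a l : ℝ} (hle : ∀ t > a, l ≤ f t)
    (hf : Tendsto f atTop (𝓝 l)) : IsGLB (f '' Ioi a) l := by
  refine ⟨?_, fun b hb => ?_⟩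
  · rintro _ ⟨t, ht, rfl⟩
    exact hle t ht
  · refine ge_of_tendsto hf ?_
    filter_upwards [eventually_gt_atTop a] with t ht
    exact hb ⟨t, ht, rfl⟩

lemma tendsto_sum_comp_mul_atTop {ι : Type*} {s : Finset ι} {c : ι → ℝ} {g : ℝ → ℝ} {l : ℝ}
    (hc : ∀ i ∈ s, 0 < c i) (hg : Tendsto g atTop (𝓝 l)) :
    Tendsto (fun t => ∑ i ∈ s, g (t * c i)) atTop (𝓝 (s.card • l)) := by
  rw [← Finset.sum_const]
  exact tendsto_finsetSum s fun i hi => hg.comp (tendsto_id.atTop_mul_const (hc i hi))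

lemma Phi_eq_setIntegral_gaussianPDFReal (u : ℝ) :
    Phi u = ∫ v in Iio u, gaussianPDFReal 0 1 v := by
  simp [Phi, gaussianPDFReal]

lemma setIntegral_gaussianPDFReal_pos (μ : ℝ) {v : NNReal} (hv : v ≠ 0) {s : Set ℝ}
    (hs0 : volume s ≠ 0) : 0 < ∫ x in s, gaussianPDFReal μ v x := by
  rw [setIntegral_pos_iff_support_of_nonneg_ae
    (.of_forall fun x => (gaussianPDFReal_pos μ v x hv).le)
    (integrable_gaussianPDFReal μ v).integrableOn]
  have hsupp : Function.support (gaussianPDFReal μ v) = univ :=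
    Function.support_eq_univ fun x => (gaussianPDFReal_pos μ v x hv).ne'
  rwa [hsupp, univ_inter, pos_iff_ne_zero]

lemma Phi_pos (u : ℝ) : 0 < Phi u := by
  rw [Phi_eq_setIntegral_gaussianPDFReal]
  exact setIntegral_gaussianPDFReal_pos 0 one_ne_zero (by simp)

lemma Phi_lt_one (u : ℝ) : Phi u < 1 := by
  have hsplit : Phi u + ∫ v in Ici u, gaussianPDFReal 0 1 v = 1 := by
    rw [Phi_eq_setIntegral_gaussianPDFReal, intervalIntegral.integral_Iio_add_Ici
      (integrable_gaussianPDFReal 0 1).integrableOn (integrable_gaussianPDFReal 0 1).integrableOn,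
      integral_gaussianPDFReal_eq_one 0 one_ne_zero]
  have htail := setIntegral_gaussianPDFReal_pos 0 one_ne_zero (by simp : volume (Ici u) ≠ 0)
  linarith

lemma tendsto_Phi_atTop : Tendsto Phi atTop (𝓝 1) := by
  have h := tendsto_setIntegral_of_monotone (μ := volume) (fun u : ℝ => measurableSet_Iio)
    (fun _ _ huv => Iio_subset_Iio huv) (integrable_gaussianPDFReal 0 1).integrableOn
  rw [iUnion_Iio, setIntegral_univ, integral_gaussianPDFReal_eq_one 0 one_ne_zero] at h
  simpa only [← Phi_eq_setIntegral_gaussianPDFReal] using h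

lemma log_Phi_neg (u : ℝ) : log (Phi u) < 0 :=
  log_neg (Phi_pos u) (Phi_lt_one u)

lemma tendsto_log_Phi_atTop : Tendsto (fun u => log (Phi u)) atTop (𝓝 0) := by
  rw [← log_one]
  exact ((continuousAt_log one_ne_zero).tendsto).comp tendsto_Phi_atTop

theorem stmt_7_general {n m : ℕ} (hm : 0 < m) (a : Fin m → EuclideanSpace ℝ (Fin n))
    (y : Fin m → ℝ)
    (xstar : EuclideanSpace ℝ (Fin n))
    (hcons : ∀ i, 0 < y i * ⟪a i, xstar⟫_ℝ)
    (f : ℝ → ℝ)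
    (hf : ∀ t, f t = -(m : ℝ)⁻¹ * ∑ i, Real.log (Phi (y i * ⟪a i, t • xstar⟫_ℝ))) :
    (∀ t > 0, 0 < f t) ∧
    Filter.Tendsto f Filter.atTop (nhds 0) ∧
    IsGLB (f '' Set.Ioi 0) 0 ∧
    ∀ t > 0, f t ≠ 0 := by
  set c : Fin m → ℝ := fun i => y i * ⟪a i, xstar⟫_ℝ
  have hf_ray : ∀ t, f t = -(m : ℝ)⁻¹ * ∑ i, log (Phi (t * c i)) := fun t => by
    simp only [hf, c, real_inner_smul_right, mul_left_comm]
  have hpos : ∀ t > 0, 0 < f t := fun t _ => by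
    have hsum : ∑ i, log (Phi (t * c i)) < 0 :=
      Finset.sum_neg (fun i _ => log_Phi_neg _) (Finset.univ_nonempty_iff.mpr ⟨⟨0, hm⟩⟩)
    rw [hf_ray, neg_mul, neg_pos]
    exact mul_neg_of_pos_of_neg (by positivity) hsum
  have htend : Tendsto f atTop (𝓝 0) := by
    have h := (tendsto_sum_comp_mul_atTop (s := Finset.univ) (fun i _ => hcons i)
      tendsto_log_Phi_atTop).const_mul (-(m : ℝ)⁻¹)
    rw [smul_zero, mul_zero] at h
    exact h.congr fun t => (hf_ray t).symm
  exact ⟨hpos, htend, isGLB_image_Ioi_of_tendsto_atTop (fun t ht => (hpos t ht).le) htend,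
    fun t ht => (hpos t ht).ne'⟩

/-- If the 1-bit measurements are consistent with `x*` (i.e. `yᵢ⟨aᵢ, x*⟩ > 0` for all `i`),
then `f_MLE(t x*)` is strictly positive for every `t > 0`, tends to `0` as `t → +∞`,
and its infimum over the ray `{t x* : t > 0}` is `0` and is not attained. -/
theorem stmt_7 {n m : ℕ} (hm : 0 < m) (a : Fin m → EuclideanSpace ℝ (Fin n))
    (y : Fin m → ℝ) (hy : ∀ i, y i = 1 ∨ y i = -1)
    (xstar : EuclideanSpace ℝ (Fin n)) (hxstar : xstar ≠ 0)
    (hcons : ∀ i, 0 < y i * ⟪a i, xstar⟫_ℝ)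
    (f : ℝ → ℝ)
    (hf : ∀ t, f t = -(m : ℝ)⁻¹ * ∑ i, Real.log (Phi (y i * ⟪a i, t • xstar⟫_ℝ))) :
    (∀ t > 0, 0 < f t) ∧
    Filter.Tendsto f Filter.atTop (nhds 0) ∧
    IsGLB (f '' Set.Ioi 0) 0 ∧
    ∀ t > 0, f t ≠ 0 :=
  stmt_7_general hm a y xstar hcons f hf
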